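/- Let G be a connected graph with minimum degree δ(G) ≥ 4, at least 5 vertices, and orientable genus g. Then b_tr(G) ≤ h₁(g) + Δ(G) − 4, where h₁(x) = 2x + 13 for 0 ≤ x ≤ 3 and h₁(x) = 4x + 7 for x ≥ 3. If moreover G contains no 3-cycles, then b_tr(G) ≤ h₂(g) + Δ(G) − 4, where h₂(0) = 8 and h₂(x) = 4x + 5 for x ≥ 1. -/

import Mathlib

open SimpleGraph Finset

variable {V : Type*} [Fintype V] [DecidableEq V]

/-- The number of orbits (cycles together with fixed points) of a permutation of a finite type. -/
noncomputable def permNumOrbits {α : Type*} [Fintype α] [DecidableEq α] (ψ : Equiv.Perm α) : ℕ :=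
  Multiset.card ψ.cycleType + (Finset.univ.filter fun a => ψ a = a).card

/-- A combinatorial (2-cell) embedding scheme of a graph on a surface:
a rotation system together with an edge signature (Mohar–Thomassen). -/
structure SimpleGraph.EmbeddingScheme (G : SimpleGraph V) [DecidableRel G.Adj] where
  rot : Equiv.Perm G.Dart
  rot_fst : ∀ d : G.Dart, (rot d).toProd.1 = d.toProd.1
  rot_cyclic : ∀ d e : G.Dart, d.toProd.1 = e.toProd.1 → ∃ k : ℕ, (rot ^ k) d = e
  sign : G.Dart → ℤˣ
  sign_symm : ∀ d : G.Dart, sign d.symm = sign d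

namespace SimpleGraph.EmbeddingScheme

variable {G : SimpleGraph V} [DecidableRel G.Adj] (S : G.EmbeddingScheme)

def swapPerm : Equiv.Perm (G.Dart × ℤˣ) :=
  Function.Involutive.toPerm (fun p => (p.1.symm, p.2 * S.sign p.1)) (by
    intro p
    simp [SimpleGraph.Dart.symm_symm, S.sign_symm p.1, mul_assoc, Int.units_mul_self])

def rotPerm : Equiv.Perm (G.Dart × ℤˣ) where
  toFun p := ((S.rot ^ (p.2 : ℤ)) p.1, p.2)
  invFun p := ((S.rot ^ (-(p.2 : ℤ))) p.1, p.2)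
  left_inv p := by
    simp [← Equiv.Perm.mul_apply, ← zpow_add]
  right_inv p := by
    show ((S.rot ^ (p.2 : ℤ)) ((S.rot ^ (-(p.2 : ℤ))) p.1), p.2) = p
    rw [← Equiv.Perm.mul_apply, ← zpow_add, add_neg_cancel, zpow_zero, Equiv.Perm.one_apply]

/-- The face-tracing permutation on signed darts. -/
def faceMap : Equiv.Perm (G.Dart × ℤˣ) := S.swapPerm.trans S.rotPerm

/-- Each face is traced by exactly two orbits of the face-tracing permutation. -/
noncomputable def numFaces : ℕ := permNumOrbits S.faceMap / 2

/-- The Euler characteristic of the closed surface determined by the scheme. -/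
noncomputable def eulerChar : ℤ :=
  (Fintype.card V : ℤ) - (G.edgeFinset.card : ℤ) + (S.numFaces : ℤ)

/-- The scheme describes an embedding on an orientable surface iff its signature
is switching-equivalent to the all-positive signature. -/
def IsOrientable : Prop := ∃ θ : V → ℤˣ, ∀ d : G.Dart, S.sign d = θ d.toProd.1 * θ d.toProd.2

end SimpleGraph.EmbeddingScheme

/-- `G` has orientable genus `g`. -/
def SimpleGraph.HasOrientableGenus (G : SimpleGraph V) [DecidableRel G.Adj] (g : ℕ) : Prop :=
  (∃ S : G.EmbeddingScheme, S.IsOrientable ∧ S.eulerChar = 2 - 2 * (g : ℤ)) ∧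
  ∀ g' : ℕ, g' < g → ¬ ∃ S : G.EmbeddingScheme, S.IsOrientable ∧ S.eulerChar = 2 - 2 * (g' : ℤ)

/-- `G` has nonorientable genus `k`. -/
def SimpleGraph.HasNonorientableGenus (G : SimpleGraph V) [DecidableRel G.Adj] (k : ℕ) : Prop :=
  (∃ S : G.EmbeddingScheme, ¬ S.IsOrientable ∧ S.eulerChar = 2 - (k : ℤ)) ∧
  ∀ k' : ℕ, k' < k → ¬ ∃ S : G.EmbeddingScheme, ¬ S.IsOrientable ∧ S.eulerChar = 2 - (k' : ℤ)

/-- `G` is planar: every component embeds in the sphere. -/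
def SimpleGraph.IsPlanar (G : SimpleGraph V) [DecidableRel G.Adj] : Prop :=
  ∃ S : G.EmbeddingScheme, S.IsOrientable ∧
    S.eulerChar = 2 * (Nat.card G.ConnectedComponent : ℤ)

/-- `S` is a total dominating set: every vertex has a neighbour in `S`. -/
def SimpleGraph.IsTotalDominatingSet (G : SimpleGraph V) (S : Finset V) : Prop :=
  ∀ v : V, ∃ u ∈ S, G.Adj u v

noncomputable def SimpleGraph.totalDominationNumber (G : SimpleGraph V) : ℕ :=
  sInf {k : ℕ | ∃ S : Finset V, G.IsTotalDominatingSet S ∧ S.card = k}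

/-- The spanning subgraph of `G` keeping only edges meeting `S`. -/
def SimpleGraph.weakSubgraph (G : SimpleGraph V) (S : Finset V) : SimpleGraph V where
  Adj u v := G.Adj u v ∧ (u ∈ S ∨ v ∈ S)
  symm := ⟨fun u v h => ⟨h.1.symm, h.2.symm⟩⟩
  loopless := ⟨fun v h => G.loopless.1 v h.1⟩

/-- `S` is a weakly connected dominating set. -/
def SimpleGraph.IsWeaklyConnectedDominatingSet (G : SimpleGraph V) (S : Finset V) : Prop :=
  S.Nonempty ∧ (G.weakSubgraph S).Connected

noncomputable def SimpleGraph.weaklyConnectedDominationNumber (G : SimpleGraph V) : ℕ :=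
  sInf {k : ℕ | ∃ S : Finset V, G.IsWeaklyConnectedDominatingSet S ∧ S.card = k}

/-- `S` is a connected dominating set. -/
def SimpleGraph.IsConnectedDominatingSet (G : SimpleGraph V) (S : Finset V) : Prop :=
  (∀ v ∉ S, ∃ u ∈ S, G.Adj u v) ∧ (G.induce (S : Set V)).Connected

noncomputable def SimpleGraph.connectedDominationNumber (G : SimpleGraph V) : ℕ :=
  sInf {k : ℕ | ∃ S : Finset V, G.IsConnectedDominatingSet S ∧ S.card = k}

/-- `S` is a restrained dominating set. -/
def SimpleGraph.IsRestrainedDominatingSet (G : SimpleGraph V) (S : Finset V) : Prop :=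
  ∀ v ∉ S, (∃ u ∈ S, G.Adj u v) ∧ (∃ w ∉ S, G.Adj w v)

noncomputable def SimpleGraph.restrainedDominationNumber (G : SimpleGraph V) : ℕ :=
  sInf {k : ℕ | ∃ S : Finset V, G.IsRestrainedDominatingSet S ∧ S.card = k}

/-- The restrained bondage number. -/
noncomputable def SimpleGraph.restrainedBondageNumber (G : SimpleGraph V) : ℕ :=
  sInf {k : ℕ | ∃ F : Finset (Sym2 V), ↑F ⊆ G.edgeSet ∧ F.card = k ∧
    G.restrainedDominationNumber < (G.deleteEdges ↑F).restrainedDominationNumber}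

/-- `S` is a total restrained dominating set. -/
def SimpleGraph.IsTotalRestrainedDominatingSet (G : SimpleGraph V) (S : Finset V) : Prop :=
  (∀ v : V, ∃ u ∈ S, G.Adj u v) ∧ ∀ v ∉ S, ∃ w ∉ S, G.Adj w v

noncomputable def SimpleGraph.totalRestrainedDominationNumber (G : SimpleGraph V) : ℕ :=
  sInf {k : ℕ | ∃ S : Finset V, G.IsTotalRestrainedDominatingSet S ∧ S.card = k}

/-- The total restrained bondage number (`⊤` if no suitable edge set exists). -/
noncomputable def SimpleGraph.totalRestrainedBondageNumber (G : SimpleGraph V) : ℕ∞ :=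
  sInf {k : ℕ∞ | ∃ F : Finset (Sym2 V), ↑F ⊆ G.edgeSet ∧ (F.card : ℕ∞) = k ∧
    (∀ v : V, ∃ u : V, (G.deleteEdges ↑F).Adj u v) ∧
    G.totalRestrainedDominationNumber < (G.deleteEdges ↑F).totalRestrainedDominationNumber}

/-- Roman dominating function. -/
def SimpleGraph.IsRomanDominatingFunction (G : SimpleGraph V) (f : V → ℕ) : Prop :=
  (∀ v : V, f v ≤ 2) ∧ ∀ v : V, f v = 0 → ∃ u : V, G.Adj u v ∧ f u = 2

noncomputable def SimpleGraph.romanDominationNumber (G : SimpleGraph V) : ℕ :=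
  sInf {k : ℕ | ∃ f : V → ℕ, G.IsRomanDominatingFunction f ∧ ∑ v : V, f v = k}

noncomputable def SimpleGraph.romanBondageNumber (G : SimpleGraph V) : ℕ :=
  sInf {k : ℕ | ∃ F : Finset (Sym2 V), ↑F ⊆ G.edgeSet ∧ F.card = k ∧
    G.romanDominationNumber < (G.deleteEdges ↑F).romanDominationNumber}

/-- The minimum edge-degree `ξ(G)`. -/
noncomputable def SimpleGraph.minEdgeDegree (G : SimpleGraph V) [DecidableRel G.Adj] : ℕ :=
  sInf {k : ℕ | ∃ d : G.Dart, G.degree d.toProd.1 + G.degree d.toProd.2 - 2 = k}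

/-- A restricted edge-cut: removing it disconnects `G` leaving no isolated vertex. -/
def SimpleGraph.IsRestrictedEdgeCut (G : SimpleGraph V) (F : Finset (Sym2 V)) : Prop :=
  ↑F ⊆ G.edgeSet ∧ ¬ (G.deleteEdges ↑F).Connected ∧
    ∀ v : V, ∃ u : V, (G.deleteEdges ↑F).Adj u v

/-- The restricted edge-connectivity `λ'(G)`. -/
noncomputable def SimpleGraph.restrictedEdgeConnectivity (G : SimpleGraph V) : ℕ :=
  sInf {k : ℕ | ∃ F : Finset (Sym2 V), G.IsRestrictedEdgeCut F ∧ F.card = k}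

/-- `G` is a star: all edges share a common vertex. -/
def SimpleGraph.IsStar (G : SimpleGraph V) : Prop :=
  ∃ c : V, ∀ e ∈ G.edgeSet, c ∈ e

/-- The average degree `2|E|/|V|` of `G`. -/
noncomputable def SimpleGraph.averageDegree (G : SimpleGraph V) [DecidableRel G.Adj] : ℝ :=
  2 * (G.edgeFinset.card : ℝ) / (Fintype.card V : ℝ)

def h1 (x : ℕ) : ℕ := if x ≤ 3 then 2 * x + 13 else 4 * x + 7
def h2 (x : ℕ) : ℕ := if x = 0 then 8 else 4 * x + 5
def k1 (x : ℕ) : ℕ := if x ≤ 2 then 2 * x + 11 else if x ≤ 5 then 2 * x + 9 else 2 * x + 7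
def k2 (x : ℕ) : ℕ := if x = 1 then 8 else 2 * x + 5

/-!
Instead of a light edge we use a light path `a - b - c` (`a ≠ c`). Deleting every other edge at
`a`, `b`, `c` leaves `a - b - c` as a component and, since `δ(G) ≥ 4`, no isolated vertex. A
minimum total restrained dominating set of the new graph must contain `a`, `b`, `c`, and one of
them can always be dropped to get a smaller such set of `G`; hence
`b_tr(G) ≤ deg a + deg b + deg c - 4 ≤ deg a + deg c + Δ(G) - 4`.

Face tracing of an orientable embedding has no orbits of length `< 3` (`< 4` without
triangles), so Euler's formula gives `|E| ≤ 3n + 6g - 6` (resp. `|E| ≤ 2n + 4g - 4`). If every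
path had `deg a + deg c > 2t`, no two vertices of degree `≤ t` would share a neighbour, so they
carry total degree at most `n`; with `t = ⌊h(g)/2⌋` the degree sum then exceeds the Euler bound
unless `n` is so small that `deg a + deg c ≤ 2(n - 1) ≤ h(g)` holds for any path.
-/

namespace Equiv.Perm

theorem zpow_units_apply_eq_self_iff {α : Type*} (f : Perm α) (u : ℤˣ) (x : α) :
    (f ^ (u : ℤ)) x = x ↔ f x = x := by
  rcases Int.units_eq_one_or u with rfl | rfl
  · simp
  · simp only [Units.val_neg, Units.val_one, zpow_neg, zpow_one, inv_eq_iff_eq]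
    exact eq_comm

variable {α : Type*} [Fintype α] [DecidableEq α]

theorem exists_apply_ne_self_pow_apply_eq_self_of_mem_cycleType {σ : Perm α} {k : ℕ}
    (hk : k ∈ σ.cycleType) : ∃ x, σ x ≠ x ∧ (σ ^ k) x = x := by
  obtain ⟨c, τ, rfl, hdisj, hc, rfl⟩ := mem_cycleType_iff.1 hk
  obtain ⟨x, hx⟩ := hc.nonempty_support
  have hτx : τ x = x := (hdisj x).resolve_left (mem_support.1 hx)
  refine ⟨x, by simpa [hτx] using mem_support.1 hx, ?_⟩
  rw [hdisj.commute.mul_pow, ← hc.orderOf, pow_orderOf_eq_one, one_mul,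
    pow_apply_eq_self_of_apply_eq_self hτx]

theorem le_of_mem_cycleType {σ : Perm α} {m k : ℕ}
    (h : ∀ x, σ x ≠ x → ∀ j, 0 < j → j < m → (σ ^ j) x ≠ x) (hk : k ∈ σ.cycleType) : m ≤ k := by
  obtain ⟨x, hx, hkx⟩ := exists_apply_ne_self_pow_apply_eq_self_of_mem_cycleType hk
  by_contra! hkm
  exact h x hx k (zero_lt_two.trans_le (two_le_of_mem_cycleType hk)) hkm hkx

theorem mul_permNumOrbits_le_card (σ : Perm α) {m : ℕ} (hm : 2 ≤ m)
    (h : ∀ x, ∀ j, 0 < j → j < m → (σ ^ j) x ≠ x) : m * permNumOrbits σ ≤ Fintype.card α := by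
  have hfix : (univ.filter fun x => σ x = x) = ∅ :=
    filter_eq_empty_iff.2 fun x _ => by simpa using h x 1 one_pos hm
  have hcycles : Multiset.card σ.cycleType • m ≤ σ.cycleType.sum :=
    Multiset.card_nsmul_le_sum fun k hk => le_of_mem_cycleType (fun x _ => h x) hk
  rw [permNumOrbits, hfix, card_empty, add_zero, mul_comm, ← smul_eq_mul]
  exact hcycles.trans (sum_cycleType_le σ)

end Equiv.Perm

namespace SimpleGraph.EmbeddingScheme

section FaceOrbits

variable {V : Type*} {G : SimpleGraph V} [DecidableRel G.Adj] (E : G.EmbeddingScheme)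

theorem rot_zpow_units_fst (u : ℤˣ) (d : G.Dart) : ((E.rot ^ (u : ℤ)) d).fst = d.fst := by
  rcases Int.units_eq_one_or u with rfl | rfl
  · simpa using E.rot_fst d
  · simpa using (E.rot_fst (E.rot⁻¹ d)).symm

theorem faceMap_fst_fst (p : G.Dart × ℤˣ) : (E.faceMap p).1.fst = p.1.snd :=
  E.rot_zpow_units_fst _ _

theorem rot_ne_self [Fintype V] {d : G.Dart} (hd : 2 ≤ G.degree d.fst) : E.rot d ≠ d := by
  intro hfix
  have hall : ∀ e : G.Dart, e.fst = d.fst → e = d := fun e he => by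
    obtain ⟨k, hk⟩ := E.rot_cyclic d e he.symm
    rwa [Equiv.Perm.pow_apply_eq_self_of_apply_eq_self hfix, eq_comm] at hk
  rw [← card_neighborFinset_eq_degree] at hd
  obtain ⟨w₁, hw₁, w₂, hw₂, hne⟩ := one_lt_card.1 hd
  rw [mem_neighborFinset] at hw₁ hw₂
  have hw := (hall ⟨(_, w₁), hw₁⟩ rfl).trans (hall ⟨(_, w₂), hw₂⟩ rfl).symm
  exact hne (congrArg (fun e : G.Dart => e.snd) hw)

theorem faceMap_ne_self (p : G.Dart × ℤˣ) : E.faceMap p ≠ p := fun h =>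
  p.1.adj.ne (by simpa [h] using (E.faceMap_fst_fst p).symm)

-- A face of length two would have to retrace the edge `p.1` backwards, which forces the
-- rotation to fix the reversed dart.
theorem faceMap_faceMap_ne_self [Fintype V] (hδ : 2 ≤ G.minDegree) (p : G.Dart × ℤˣ) :
    E.faceMap (E.faceMap p) ≠ p := by
  intro h
  have hsymm : (E.faceMap p).1 = p.1.symm := by
    ext
    · exact E.faceMap_fst_fst p
    · simpa [h] using (E.faceMap_fst_fst (E.faceMap p)).symm
  have hfix : (E.rot ^ ((p.2 * E.sign p.1 : ℤˣ) : ℤ)) p.1.symm = p.1.symm := hsymm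
  rw [Equiv.Perm.zpow_units_apply_eq_self_iff] at hfix
  exact E.rot_ne_self (hδ.trans (G.minDegree_le_degree _)) hfix

theorem faceMap_faceMap_faceMap_ne_self [DecidableEq V] (hG : G.CliqueFree 3)
    (p : G.Dart × ℤˣ) : E.faceMap (E.faceMap (E.faceMap p)) ≠ p := by
  intro h
  obtain ⟨q, hq⟩ : ∃ q, E.faceMap p = q := ⟨_, rfl⟩
  obtain ⟨r, hr⟩ : ∃ r, E.faceMap q = r := ⟨_, rfl⟩
  have hqp : q.1.fst = p.1.snd := hq ▸ E.faceMap_fst_fst p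
  have hrq : r.1.fst = q.1.snd := hr ▸ E.faceMap_fst_fst q
  have hrp : r.1.snd = p.1.fst := by rw [← E.faceMap_fst_fst r, ← hr, ← hq, h]
  apply hG {p.1.fst, p.1.snd, q.1.snd}
  rw [is3Clique_triple_iff]
  refine ⟨p.1.adj, ?_, ?_⟩
  · simpa [hrq, hrp] using r.1.adj.symm
  · simpa [hqp] using q.1.adj

end FaceOrbits

variable {G : SimpleGraph V} [DecidableRel G.Adj] (E : G.EmbeddingScheme)

theorem mul_numFaces_le {m : ℕ} (hm : 2 ≤ m)
    (h : ∀ p, ∀ j, 0 < j → j < m → (E.faceMap ^ j) p ≠ p) :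
    m * E.numFaces ≤ 2 * #G.edgeFinset := by
  have horbits := E.faceMap.mul_permNumOrbits_le_card hm h
  rw [Fintype.card_prod, dart_card_eq_twice_card_edges, Fintype.card_units_int] at horbits
  have hfaces : E.numFaces * 2 ≤ permNumOrbits E.faceMap := Nat.div_mul_le_self _ 2
  nlinarith

theorem three_mul_numFaces_le (hδ : 2 ≤ G.minDegree) : 3 * E.numFaces ≤ 2 * #G.edgeFinset :=
  E.mul_numFaces_le (by norm_num) fun p j hj hj3 => by
    interval_cases j
    · simpa using E.faceMap_ne_self p
    · simpa [sq] using E.faceMap_faceMap_ne_self hδ p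

theorem four_mul_numFaces_le (hδ : 2 ≤ G.minDegree) (hG : G.CliqueFree 3) :
    4 * E.numFaces ≤ 2 * #G.edgeFinset :=
  E.mul_numFaces_le (by norm_num) fun p j hj hj4 => by
    interval_cases j
    · simpa using E.faceMap_ne_self p
    · simpa [sq] using E.faceMap_faceMap_ne_self hδ p
    · simpa [pow_succ] using E.faceMap_faceMap_faceMap_ne_self hG p

theorem mul_eulerChar_add_le {m : ℕ} (h : m * E.numFaces ≤ 2 * #G.edgeFinset) :
    m * E.eulerChar + (m - 2) * #G.edgeFinset ≤ m * Fintype.card V := by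
  have h' : (m : ℤ) * E.numFaces ≤ 2 * #G.edgeFinset := by exact_mod_cast h
  rw [eulerChar]
  linarith

end SimpleGraph.EmbeddingScheme

namespace SimpleGraph

section LightTwoPaths

variable {V : Type*} [Fintype V] (G : SimpleGraph V) [DecidableRel G.Adj]

def HasLightTwoPath (k : ℕ) : Prop :=
  ∃ a b c, G.Adj a b ∧ G.Adj b c ∧ a ≠ c ∧ G.degree a + G.degree c ≤ k

variable {G}

theorem HasLightTwoPath.mono {k l : ℕ} (h : G.HasLightTwoPath k) (hkl : k ≤ l) :
    G.HasLightTwoPath l :=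
  let ⟨a, b, c, hab, hbc, hac, hk⟩ := h
  ⟨a, b, c, hab, hbc, hac, hk.trans hkl⟩

theorem nonempty_of_pos_minDegree (h : 0 < G.minDegree) : Nonempty V := by
  by_contra hV
  rw [not_nonempty_iff] at hV
  simp at h

theorem hasLightTwoPath_of_two_mul_card_le (hδ : 2 ≤ G.minDegree) {k : ℕ}
    (hk : 2 * Fintype.card V ≤ k + 2) : G.HasLightTwoPath k := by
  obtain ⟨b⟩ := nonempty_of_pos_minDegree (G := G) (by omega)
  have hb : 1 < #(G.neighborFinset b) := by
    rw [card_neighborFinset_eq_degree]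
    exact hδ.trans (G.minDegree_le_degree b)
  obtain ⟨a, ha, c, hc, hac⟩ := one_lt_card.1 hb
  rw [mem_neighborFinset] at ha hc
  have := G.degree_lt_card_verts a
  have := G.degree_lt_card_verts c
  exact ⟨a, b, c, ha.symm, hc, hac, by omega⟩

theorem sum_degree_le_card_of_card_filter_adj_le_one (s : Finset V)
    (h : ∀ y, #{v ∈ s | G.Adj v y} ≤ 1) : ∑ v ∈ s, G.degree v ≤ Fintype.card V :=
  calc ∑ v ∈ s, G.degree v = ∑ y, #{v ∈ s | G.Adj v y} := by
        simp_rw [← card_neighborFinset_eq_degree, neighborFinset_eq_filter]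
        exact sum_card_bipartiteAbove_eq_sum_card_bipartiteBelow G.Adj
    _ ≤ ∑ _y : V, 1 := sum_le_sum fun y _ => h y
    _ = Fintype.card V := by simp

theorem card_filter_adj_le_one_of_not_hasLightTwoPath {t : ℕ}
    (h : ¬ G.HasLightTwoPath (2 * t)) (y : V) :
    #{v ∈ univ.filter (G.degree · ≤ t) | G.Adj v y} ≤ 1 := by
  by_contra! hy
  obtain ⟨a, ha, c, hc, hac⟩ := one_lt_card.1 hy
  simp only [mem_filter, mem_univ, true_and] at ha hc
  exact h ⟨a, y, c, ha.2, hc.2.symm, hac, by omega⟩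

theorem hasLightTwoPath_or_mul_card_le (δ t : ℕ) (hδ : δ ≤ G.minDegree) (ht : δ ≤ t + 1) :
    G.HasLightTwoPath (2 * t) ∨
      (t + 1) * δ * Fintype.card V ≤ 2 * δ * #G.edgeFinset + (t + 1 - δ) * Fintype.card V := by
  refine or_iff_not_imp_left.2 fun hlight => ?_
  set low := univ.filter (G.degree · ≤ t)
  set high := univ.filter fun v => ¬ G.degree v ≤ t
  have hlow : ∑ v ∈ low, G.degree v ≤ Fintype.card V :=
    sum_degree_le_card_of_card_filter_adj_le_one low
      (card_filter_adj_le_one_of_not_hasLightTwoPath hlight)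
  have hlow_ge : #low • δ ≤ ∑ v ∈ low, G.degree v :=
    card_nsmul_le_sum _ _ _ fun v _ => hδ.trans (G.minDegree_le_degree v)
  have hhigh_ge : #high • (t + 1) ≤ ∑ v ∈ high, G.degree v :=
    card_nsmul_le_sum _ _ _ fun v hv => by have := (mem_filter.1 hv).2; omega
  have hsum : ∑ v ∈ low, G.degree v + ∑ v ∈ high, G.degree v = 2 * #G.edgeFinset := by
    rw [sum_filter_add_sum_filter_not, sum_degrees_eq_twice_card_edges]
  have hcard : #low + #high = Fintype.card V := by
    rw [card_filter_add_card_filter_not, card_univ]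
  obtain ⟨s, hs⟩ : ∃ s, t + 1 = δ + s := ⟨t + 1 - δ, by omega⟩
  rw [smul_eq_mul] at hlow_ge hhigh_ge
  rw [hs] at hhigh_ge ⊢
  rw [← hcard] at hlow ⊢
  rw [Nat.add_sub_cancel_left]
  nlinarith [Nat.mul_le_mul_left δ hlow_ge, Nat.mul_le_mul_left s hlow_ge,
    Nat.mul_le_mul_left s hlow, Nat.mul_le_mul_left δ hhigh_ge]

theorem hasLightTwoPath_h1 {g : ℕ} (hδ : 4 ≤ G.minDegree)
    (he : #G.edgeFinset + 6 ≤ 3 * Fintype.card V + 6 * g) : G.HasLightTwoPath (h1 g) := by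
  by_cases hg : g ≤ 3
  · rcases hasLightTwoPath_or_mul_card_le 4 (g + 6) hδ (by omega) with hlight | hcount
    · exact hlight.mono (by simp only [h1, hg, if_true]; omega)
    · refine hasLightTwoPath_of_two_mul_card_le (by omega) ?_
      simp only [h1, hg, if_true]
      interval_cases g <;> omega
  · rcases hasLightTwoPath_or_mul_card_le 4 (2 * g + 3) hδ (by omega) with hlight | hcount
    · exact hlight.mono (by simp only [h1, hg, if_false]; omega)
    · refine hasLightTwoPath_of_two_mul_card_le (by omega) ?_
      simp only [h1, hg, if_false]
      rw [show 2 * g + 3 + 1 - 4 = 2 * g by omega] at hcount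
      by_contra! hn
      nlinarith

theorem hasLightTwoPath_h2 {g : ℕ} (hδ : 4 ≤ G.minDegree)
    (he : #G.edgeFinset + 4 ≤ 2 * Fintype.card V + 4 * g) : G.HasLightTwoPath (h2 g) := by
  by_cases hg : g = 0
  · subst hg
    rcases hasLightTwoPath_or_mul_card_le 4 3 hδ le_rfl with hlight | hcount
    · exact hlight.mono (by simp [h2])
    · omega
  · rcases hasLightTwoPath_or_mul_card_le 4 (2 * g + 2) hδ (by omega) with hlight | hcount
    · exact hlight.mono (by simp only [h2, hg, if_false]; omega)
    · refine hasLightTwoPath_of_two_mul_card_le (by omega) ?_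
      simp only [h2, hg, if_false]
      obtain ⟨g, rfl⟩ := Nat.exists_eq_add_one_of_ne_zero hg
      rw [show 2 * (g + 1) + 2 + 1 - 4 = 2 * g + 1 by omega] at hcount
      by_contra! hn
      nlinarith

end LightTwoPaths

section TotalRestrainedDomination

variable {V : Type*} {G : SimpleGraph V}

theorem exists_adj_notMem_of_card_lt [Fintype V] [DecidableRel G.Adj] {v : V} (s : Finset V)
    (h : #s < G.degree v) : ∃ p, G.Adj v p ∧ p ∉ s := by
  rw [← card_neighborFinset_eq_degree] at h
  obtain ⟨p, hp, hps⟩ := exists_mem_notMem_of_card_lt_card h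
  exact ⟨p, (mem_neighborFinset _ _ _).1 hp, hps⟩

theorem totalRestrainedDominationNumber_le_card {S : Finset V}
    (hS : G.IsTotalRestrainedDominatingSet S) : G.totalRestrainedDominationNumber ≤ #S :=
  Nat.sInf_le ⟨S, hS, rfl⟩

theorem exists_isTotalRestrainedDominatingSet_card_eq [Fintype V] (hG : ∀ v, ∃ u, G.Adj u v) :
    ∃ S, G.IsTotalRestrainedDominatingSet S ∧ #S = G.totalRestrainedDominationNumber := by
  have huniv : G.IsTotalRestrainedDominatingSet univ :=
    ⟨fun v => (hG v).imp fun u hu => ⟨mem_univ u, hu⟩, fun v hv => absurd (mem_univ v) hv⟩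
  exact Nat.sInf_mem (s := {k | ∃ S, G.IsTotalRestrainedDominatingSet S ∧ #S = k})
    ⟨_, univ, huniv, rfl⟩

theorem totalRestrainedBondageNumber_le_card {F : Finset (Sym2 V)} (hF : ↑F ⊆ G.edgeSet)
    (hiso : ∀ v, ∃ u, (G.deleteEdges ↑F).Adj u v)
    (hlt : G.totalRestrainedDominationNumber <
      (G.deleteEdges ↑F).totalRestrainedDominationNumber) :
    G.totalRestrainedBondageNumber ≤ #F :=
  sInf_le ⟨F, hF, rfl, hiso, hlt⟩

theorem isTotalRestrainedDominatingSet_of_subset {S T : Finset V} (hTS : T ⊆ S)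
    (hS : ∀ v ∉ S, ∃ w ∉ S, G.Adj w v) (hT : ∀ v, ∃ u ∈ T, G.Adj u v)
    (hST : ∀ v ∈ S, v ∉ T → ∃ w ∉ T, G.Adj w v) : G.IsTotalRestrainedDominatingSet T := by
  refine ⟨hT, fun v hvT => ?_⟩
  by_cases hvS : v ∈ S
  · exact hST v hvS hvT
  · obtain ⟨w, hwS, hw⟩ := hS v hvS
    exact ⟨w, fun hwT => hwS (hTS hwT), hw⟩

end TotalRestrainedDomination

section PathInDominatingSet

variable {V : Type*} [DecidableEq V] {G : SimpleGraph V} {a b c : V} {S T : Finset V}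

theorem forall_exists_adj_mem_of_sdiff_subset
    (hdom : ∀ v ∉ ({a, b, c} : Finset V), ∃ u ∈ S \ {a, b, c}, G.Adj u v)
    (hT : S \ {a, b, c} ⊆ T) (ha : ∃ u ∈ T, G.Adj u a) (hb : ∃ u ∈ T, G.Adj u b)
    (hc : ∃ u ∈ T, G.Adj u c) : ∀ v, ∃ u ∈ T, G.Adj u v := by
  intro v
  by_cases hv : v ∈ ({a, b, c} : Finset V)
  · simp only [mem_insert, mem_singleton] at hv
    rcases hv with rfl | rfl | rfl <;> assumption
  · obtain ⟨u, hu, huv⟩ := hdom v hv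
    exact ⟨u, hT hu, huv⟩

theorem exists_card_lt_of_adj_notMem_left (hab : G.Adj a b) (hbc : G.Adj b c) (hac : a ≠ c)
    (haS : a ∈ S) (hbS : b ∈ S) (hcS : c ∈ S)
    (hdom : ∀ v ∉ ({a, b, c} : Finset V), ∃ u ∈ S \ {a, b, c}, G.Adj u v)
    (hres : ∀ v ∉ S, ∃ w ∉ S, G.Adj w v) {p : V} (hap : G.Adj a p) (hpS : p ∉ S) :
    ∃ T, G.IsTotalRestrainedDominatingSet T ∧ #T < #S := by
  refine ⟨S.erase a, isTotalRestrainedDominatingSet_of_subset (erase_subset a S) hres ?_ ?_,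
    card_erase_lt_of_mem haS⟩
  · refine forall_exists_adj_mem_of_sdiff_subset hdom ?_ ⟨b, ?_, hab.symm⟩ ⟨c, ?_, hbc.symm⟩
      ⟨b, ?_, hbc⟩
    · intro v hv
      simp only [mem_sdiff, mem_insert, mem_singleton, not_or] at hv
      exact mem_erase.2 ⟨hv.2.1, hv.1⟩
    all_goals simp [*, hab.ne', Ne.symm hac]
  · intro v hvS hvT
    obtain rfl : v = a := by simpa [hvS] using hvT
    exact ⟨p, fun h => hpS (mem_of_mem_erase h), hap.symm⟩

theorem exists_card_lt_of_adj_notMem_middle [Fintype V] [DecidableRel G.Adj]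
    (hδ : 2 ≤ G.minDegree) (hab : G.Adj a b) (haS : a ∈ S)
    (hdom : ∀ v ∉ ({a, b, c} : Finset V), ∃ u ∈ S \ {a, b, c}, G.Adj u v)
    (hres : ∀ v ∉ S, ∃ w ∉ S, G.Adj w v) (hA : ∀ p, G.Adj a p → p ∈ S)
    (hC : ∀ p, G.Adj c p → p ∈ S) {z : V} (hbz : G.Adj b z) (hzS : z ∉ S) :
    ∃ T, G.IsTotalRestrainedDominatingSet T ∧ #T < #S := by
  have hend : ∀ x, (∀ p, G.Adj x p → p ∈ S) → ∃ u ∈ S.erase b, G.Adj u x := fun x hx => by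
    obtain ⟨p, hxp, hpb⟩ := exists_adj_notMem_of_card_lt (G := G) (v := x) {b}
      (by have := G.minDegree_le_degree x; rw [card_singleton]; omega)
    exact ⟨p, mem_erase.2 ⟨by simpa using hpb, hx p hxp⟩, hxp.symm⟩
  refine ⟨S.erase b, isTotalRestrainedDominatingSet_of_subset (erase_subset b S) hres ?_ ?_,
    card_erase_lt_of_mem (hA b hab)⟩
  · refine forall_exists_adj_mem_of_sdiff_subset hdom ?_ (hend a hA)
      ⟨a, mem_erase.2 ⟨hab.ne, haS⟩, hab⟩ (hend c hC)
    intro v hv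
    simp only [mem_sdiff, mem_insert, mem_singleton, not_or] at hv
    exact mem_erase.2 ⟨hv.2.2.1, hv.1⟩
  · intro v hvS hvT
    obtain rfl : v = b := by simpa [hvS] using hvT
    exact ⟨z, fun h => hzS (mem_of_mem_erase h), hbz.symm⟩

theorem exists_card_lt_of_forall_adj_mem [Fintype V] [DecidableRel G.Adj]
    (hδ : 4 ≤ G.minDegree) (hab : G.Adj a b) (hbc : G.Adj b c) (haS : a ∈ S)
    (hdom : ∀ v ∉ ({a, b, c} : Finset V), ∃ u ∈ S \ {a, b, c}, G.Adj u v)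
    (hres : ∀ v ∉ S, ∃ w ∉ S, G.Adj w v) (hA : ∀ p, G.Adj a p → p ∈ S)
    (hB : ∀ p, G.Adj b p → p ∈ S) (hC : ∀ p, G.Adj c p → p ∈ S) :
    ∃ T, G.IsTotalRestrainedDominatingSet T ∧ #T < #S := by
  have hpath : ∀ x, (∀ p, G.Adj x p → p ∈ S) → ∃ u ∈ S \ {a, b, c}, G.Adj u x := fun x hx => by
    have hN : #({a, b, c} : Finset V) ≤ 3 := card_le_three
    obtain ⟨p, hxp, hpN⟩ := exists_adj_notMem_of_card_lt (G := G) (v := x) {a, b, c}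
      (hN.trans_lt (by have := G.minDegree_le_degree x; omega))
    exact ⟨p, mem_sdiff.2 ⟨hx p hxp, hpN⟩, hxp.symm⟩
  refine ⟨S \ {a, b, c}, isTotalRestrainedDominatingSet_of_subset sdiff_subset hres
    (forall_exists_adj_mem_of_sdiff_subset hdom subset_rfl (hpath a hA) (hpath b hB) (hpath c hC))
    ?_, card_lt_card (sdiff_ssubset (insert_subset_iff.2 ⟨haS, ?_⟩) (insert_nonempty _ _))⟩
  · intro v hvS hvT
    have hv : v = a ∨ v = b ∨ v = c := by simp [hvS] at hvT; tauto
    rcases hv with rfl | rfl | rfl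
    · exact ⟨b, by simp, hab.symm⟩
    · exact ⟨a, by simp, hab⟩
    · exact ⟨b, by simp, hbc⟩
  · simp [insert_subset_iff, hA b hab, hB c hbc]

theorem exists_isTotalRestrainedDominatingSet_card_lt [Fintype V] [DecidableRel G.Adj]
    (hδ : 4 ≤ G.minDegree) (hab : G.Adj a b) (hbc : G.Adj b c) (hac : a ≠ c)
    (haS : a ∈ S) (hbS : b ∈ S) (hcS : c ∈ S)
    (hdom : ∀ v ∉ ({a, b, c} : Finset V), ∃ u ∈ S \ {a, b, c}, G.Adj u v)
    (hres : ∀ v ∉ S, ∃ w ∉ S, G.Adj w v) :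
    ∃ T, G.IsTotalRestrainedDominatingSet T ∧ #T < #S := by
  by_cases hA : ∀ p, G.Adj a p → p ∈ S
  swap
  · push Not at hA
    obtain ⟨p, hap, hpS⟩ := hA
    exact exists_card_lt_of_adj_notMem_left hab hbc hac haS hbS hcS hdom hres hap hpS
  by_cases hC : ∀ p, G.Adj c p → p ∈ S
  swap
  · push Not at hC
    obtain ⟨q, hcq, hqS⟩ := hC
    have hN : ({c, b, a} : Finset V) = {a, b, c} := by
      ext
      simp only [mem_insert, mem_singleton]
      tauto
    exact exists_card_lt_of_adj_notMem_left hbc.symm hab.symm (Ne.symm hac) hcS hbS haS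
      (hN ▸ hdom) hres hcq hqS
  by_cases hB : ∀ p, G.Adj b p → p ∈ S
  · exact exists_card_lt_of_forall_adj_mem hδ hab hbc haS hdom hres hA hB hC
  · push Not at hB
    obtain ⟨z, hbz, hzS⟩ := hB
    exact exists_card_lt_of_adj_notMem_middle (by omega) hab haS hdom hres hA hC hbz hzS

end PathInDominatingSet

section DetachingEdges

variable (G : SimpleGraph V) [DecidableRel G.Adj] {a b c : V}

/-- Deleting these edges leaves the path `a - b - c` as a connected component. -/
def detachingEdges (a b c : V) : Finset (Sym2 V) :=
  {e ∈ G.edgeFinset | (a ∈ e ∨ b ∈ e ∨ c ∈ e) ∧ e ≠ s(a, b) ∧ e ≠ s(b, c)}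

variable {G}

theorem coe_detachingEdges_subset : ↑(G.detachingEdges a b c) ⊆ G.edgeSet := fun _ he =>
  mem_edgeFinset.1 (mem_filter.1 he).1

theorem deleteEdges_detachingEdges_adj {x y : V} :
    (G.deleteEdges ↑(G.detachingEdges a b c)).Adj x y ↔ G.Adj x y ∧
      (s(x, y) = s(a, b) ∨ s(x, y) = s(b, c) ∨
        x ∉ ({a, b, c} : Finset V) ∧ y ∉ ({a, b, c} : Finset V)) := by
  simp only [deleteEdges_adj, detachingEdges, coe_filter, Set.mem_ofPred_eq, mem_edgeFinset,
    mem_edgeSet, Sym2.mem_iff, mem_insert, mem_singleton]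
  tauto

theorem card_detachingEdges_add_four_le (hab : G.Adj a b) (hbc : G.Adj b c) (hac : a ≠ c) :
    #(G.detachingEdges a b c) + 4 ≤ G.degree a + G.degree b + G.degree c := by
  set A := (G.incidenceFinset a).erase s(a, b) with hA_def
  set B := ((G.incidenceFinset b).erase s(a, b)).erase s(b, c) with hB_def
  set C := (G.incidenceFinset c).erase s(b, c) with hC_def
  have hsub : G.detachingEdges a b c ⊆ A ∪ B ∪ C := fun e he => by
    simp only [detachingEdges, mem_filter, mem_edgeFinset] at he
    simp only [A, B, C, mem_union, mem_erase, mem_incidenceFinset, incidenceSet, Set.mem_sep_iff]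
    tauto
  have hab_a : s(a, b) ∈ G.incidenceFinset a := by simpa using hab
  have hab_b : s(a, b) ∈ G.incidenceFinset b := by
    rw [mem_incidenceFinset, mk'_mem_incidenceSet_right_iff]
    exact hab
  have hbc_b : s(b, c) ∈ (G.incidenceFinset b).erase s(a, b) := by
    simpa [hbc.ne, hab.ne', hac.symm] using hbc
  have hbc_c : s(b, c) ∈ G.incidenceFinset c := by
    rw [mem_incidenceFinset, mk'_mem_incidenceSet_right_iff]
    exact hbc
  have hA : #A + 1 = G.degree a := by
    rw [hA_def, card_erase_add_one hab_a, card_incidenceFinset_eq_degree]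
  have hB : #B + 1 + 1 = G.degree b := by
    rw [hB_def, card_erase_add_one hbc_b, card_erase_add_one hab_b, card_incidenceFinset_eq_degree]
  have hC : #C + 1 = G.degree c := by
    rw [hC_def, card_erase_add_one hbc_c, card_incidenceFinset_eq_degree]
  have := (card_le_card hsub).trans (card_union_le _ _)
  have := card_union_le A B
  omega

theorem exists_adj_deleteEdges_detachingEdges (hδ : 4 ≤ G.minDegree) (hab : G.Adj a b)
    (hbc : G.Adj b c) (v : V) : ∃ u, (G.deleteEdges ↑(G.detachingEdges a b c)).Adj u v := by
  simp only [deleteEdges_detachingEdges_adj]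
  by_cases hv : v ∈ ({a, b, c} : Finset V)
  · simp only [mem_insert, mem_singleton] at hv
    rcases hv with rfl | rfl | rfl
    · exact ⟨b, hab.symm, Or.inl Sym2.eq_swap⟩
    · exact ⟨a, hab, Or.inl rfl⟩
    · exact ⟨b, hbc, Or.inr (Or.inl rfl)⟩
  · have hN : #({a, b, c} : Finset V) ≤ 3 := card_le_three
    obtain ⟨p, hvp, hpN⟩ := exists_adj_notMem_of_card_lt (G := G) (v := v) {a, b, c}
      (hN.trans_lt (by have := G.minDegree_le_degree v; omega))
    exact ⟨p, hvp.symm, Or.inr (Or.inr ⟨hpN, hv⟩)⟩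

theorem totalRestrainedDominationNumber_lt_deleteEdges_detachingEdges (hδ : 4 ≤ G.minDegree)
    (hab : G.Adj a b) (hbc : G.Adj b c) (hac : a ≠ c) :
    G.totalRestrainedDominationNumber <
      (G.deleteEdges ↑(G.detachingEdges a b c)).totalRestrainedDominationNumber := by
  set H := G.deleteEdges ↑(G.detachingEdges a b c)
  have hHG : H ≤ G := deleteEdges_le _
  have hpath : ∀ u v, H.Adj u v → u ∈ ({a, b, c} : Finset V) →
      s(u, v) = s(a, b) ∨ s(u, v) = s(b, c) := fun u v huv hu => by
    rcases (deleteEdges_detachingEdges_adj.1 huv).2 with h | h | h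
    exacts [Or.inl h, Or.inr h, absurd hu h.1]
  have hHa : ∀ u, H.Adj u a → u = b := fun u hu => by
    simpa [Sym2.eq_iff, hab.ne, hab.ne', hac] using hpath a u hu.symm (by simp)
  have hHc : ∀ u, H.Adj u c → u = b := fun u hu => by
    simpa [Sym2.eq_iff, hbc.ne, hbc.ne', hac, Ne.symm hac] using hpath c u hu.symm (by simp)
  have hHN : ∀ u v, H.Adj u v → u ∈ ({a, b, c} : Finset V) → v ∈ ({a, b, c} : Finset V) := by
    intro u v huv hu
    rcases hpath u v huv hu with h | h <;> rcases Sym2.eq_iff.1 h with ⟨-, rfl⟩ | ⟨-, rfl⟩ <;> simp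
  obtain ⟨S, hS, hScard⟩ := exists_isTotalRestrainedDominatingSet_card_eq
    (exists_adj_deleteEdges_detachingEdges hδ hab hbc)
  have hbS : b ∈ S := by
    obtain ⟨u, hu, hua⟩ := hS.1 a
    rwa [hHa u hua] at hu
  have hend : ∀ x, (∀ u, H.Adj u x → u = b) → x ∈ S := fun x hx => by
    by_contra hxS
    obtain ⟨w, hwS, hwx⟩ := hS.2 x hxS
    exact hwS (hx w hwx ▸ hbS)
  have hdom : ∀ v ∉ ({a, b, c} : Finset V), ∃ u ∈ S \ {a, b, c}, G.Adj u v := fun v hv => by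
    obtain ⟨u, hu, huv⟩ := hS.1 v
    exact ⟨u, mem_sdiff.2 ⟨hu, fun huN => hv (hHN u v huv huN)⟩, hHG huv⟩
  have hres : ∀ v ∉ S, ∃ w ∉ S, G.Adj w v := fun v hv => by
    obtain ⟨w, hw, hwv⟩ := hS.2 v hv
    exact ⟨w, hw, hHG hwv⟩
  obtain ⟨T, hT, hTS⟩ := exists_isTotalRestrainedDominatingSet_card_lt hδ hab hbc hac
    (hend a hHa) hbS (hend c hHc) hdom hres
  calc G.totalRestrainedDominationNumber ≤ #T := totalRestrainedDominationNumber_le_card hT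
    _ < #S := hTS
    _ = H.totalRestrainedDominationNumber := hScard

theorem totalRestrainedBondageNumber_le_degree_add (hδ : 4 ≤ G.minDegree) (hab : G.Adj a b)
    (hbc : G.Adj b c) (hac : a ≠ c) :
    G.totalRestrainedBondageNumber ≤ (G.degree a + G.degree b + G.degree c - 4 : ℕ) := by
  have hcard := card_detachingEdges_add_four_le hab hbc hac
  refine (totalRestrainedBondageNumber_le_card coe_detachingEdges_subset
    (exists_adj_deleteEdges_detachingEdges hδ hab hbc)
    (totalRestrainedDominationNumber_lt_deleteEdges_detachingEdges hδ hab hbc hac)).trans ?_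
  exact_mod_cast (by omega)

end DetachingEdges

end SimpleGraph

theorem statement_11_general {V : Type*} [Fintype V] [DecidableEq V] (G : SimpleGraph V)
    [DecidableRel G.Adj] (hδ : 4 ≤ G.minDegree)
    (g : ℕ) (hg : G.HasOrientableGenus g) :
    G.totalRestrainedBondageNumber ≤ ((h1 g + G.maxDegree - 4 : ℕ) : ℕ∞) ∧
      (G.CliqueFree 3 →
        G.totalRestrainedBondageNumber ≤ ((h2 g + G.maxDegree - 4 : ℕ) : ℕ∞)) := by
  obtain ⟨⟨E, -, hχ⟩, -⟩ := hg
  have hbound (k : ℕ) (hk : G.HasLightTwoPath k) :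
      G.totalRestrainedBondageNumber ≤ ((k + G.maxDegree - 4 : ℕ) : ℕ∞) := by
    obtain ⟨a, b, c, hab, hbc, hac, hk⟩ := hk
    refine (totalRestrainedBondageNumber_le_degree_add hδ hab hbc hac).trans (Nat.cast_le.2 ?_)
    have := G.degree_le_maxDegree b
    omega
  refine ⟨hbound _ (hasLightTwoPath_h1 hδ ?_), fun hG => hbound _ (hasLightTwoPath_h2 hδ ?_)⟩
  · have := E.mul_eulerChar_add_le (E.three_mul_numFaces_le (by omega))
    rw [hχ] at this
    push_cast at this
    omega
  · have := E.mul_eulerChar_add_le (E.four_mul_numFaces_le (by omega) hG)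
    rw [hχ] at this
    push_cast at this
    omega

/-- bound on the total restrained bondage number via orientable genus. -/
theorem statement_11 {V : Type*} [Fintype V] [DecidableEq V] (G : SimpleGraph V)
    [DecidableRel G.Adj] (hconn : G.Connected) (hδ : 4 ≤ G.minDegree)
    (hcard : 5 ≤ Fintype.card V) (g : ℕ) (hg : G.HasOrientableGenus g) :
    G.totalRestrainedBondageNumber ≤ ((h1 g + G.maxDegree - 4 : ℕ) : ℕ∞) ∧
      (G.CliqueFree 3 →
        G.totalRestrainedBondageNumber ≤ ((h2 g + G.maxDegree - 4 : ℕ) : ℕ∞)) :=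
  statement_11_general G hδ g hg
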